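/- Irrelevance of variables, formula part (Lemma 1(1) of the paper): let φ be a DL-PA∥ formula, P ⊆ ℙ with vars(φ) ⊆ P, and let M₁, M₁' be models with M₁∩P = M₁'∩P. Then M₁ ⊨ φ implies M₁' ⊨ φ. -/

import Mathlib

set_option maxHeartbeats 1000000

/-- Propositional variables. -/
abbrev PVar := ℕ

/-- A DL-PA∥ model: readable variables `R`, writable variables `W`,
valuation `V`, with writability implying readability. -/
@[ext]
structure Model where
  R : Set PVar
  W : Set PVar
  V : Set PVar
  sub : W ⊆ R

mutual
/-- Formulas of DL-PA∥. -/
inductive Formula : Type where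
  | atom : PVar → Formula
  | top  : Formula
  | neg  : Formula → Formula
  | or   : Formula → Formula → Formula
  | dia  : Program → Formula → Formula
/-- Programs of DL-PA∥. -/
inductive Program : Type where
  | assignT : PVar → Program   -- +p
  | assignF : PVar → Program   -- −p
  | addR : PVar → Program      -- +r p
  | remR : PVar → Program      -- −r p
  | addW : PVar → Program      -- +w p
  | remW : PVar → Program      -- −w p
  | testEx : Formula → Program -- exogenous test φ?
  | testEn : Formula → Program -- endogenous test φ?ⁿ
  | seq : Program → Program → Program
  | choice : Program → Program → Program
  | star : Program → Program
  | par : Program → Program → Program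
end

/-- RW-disjointness. -/
def RWdisjoint (M1 M2 : Model) : Prop :=
  M1.W ∩ M2.R = ∅ ∧ M2.W ∩ M1.R = ∅

/-- Split relation `M ◁ (M₁,M₂)`. -/
def SplitRel (M M1 M2 : Model) : Prop :=
  RWdisjoint M1 M2 ∧ M.R = M1.R ∪ M2.R ∧ M.W = M1.W ∪ M2.W ∧ M.V = M1.V ∧ M.V = M2.V

/-- Merge relation `M ▷ (M₁,M₂)`. -/
def MergeRel (M M1 M2 : Model) : Prop :=
  RWdisjoint M1 M2 ∧ M.R = M1.R ∪ M2.R ∧ M.W = M1.W ∪ M2.W ∧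
  M1.V \ M.W = M2.V \ M.W ∧ M.V = (M1.V ∩ M1.W) ∪ (M2.V ∩ M2.W) ∪ (M1.V ∩ M2.V)

/-- Indistinguishability `M ∼ M'`. -/
def Indist (M M' : Model) : Prop :=
  M.R = M'.R ∧ M.W = M'.W ∧ M.V ∩ M.R = M'.V ∩ M'.R

mutual
/-- Truth of a formula in a model. -/
def Sat : Model → Formula → Prop
  | M, .atom p => p ∈ M.V
  | _, .top => True
  | M, .neg φ => ¬ Sat M φ
  | M, .or φ ψ => Sat M φ ∨ Sat M ψ
  | M, .dia π φ => ∃ M', Interp π M M' ∧ Sat M' φ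
/-- Interpretation of programs as relations between models. -/
def Interp : Program → Model → Model → Prop
  | .assignT p, M, M' => M'.R = M.R ∧ M'.W = M.W ∧ M'.V = M.V ∪ {p} ∧ p ∈ M.W
  | .assignF p, M, M' => M'.R = M.R ∧ M'.W = M.W ∧ M'.V = M.V \ {p} ∧ p ∈ M.W
  | .addR p, M, M' => M'.R = M.R ∪ {p} ∧ M'.W = M.W ∧ M'.V = M.V
  | .remR p, M, M' => M'.R = M.R \ {p} ∧ M'.W = M.W \ {p} ∧ M'.V = M.V
  | .addW p, M, M' => M'.R = M.R ∪ {p} ∧ M'.W = M.W ∪ {p} ∧ M'.V = M.V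
  | .remW p, M, M' => M'.R = M.R ∧ M'.W = M.W \ {p} ∧ M'.V = M.V
  | .testEx φ, M, M' => M = M' ∧ Sat M φ
  | .testEn φ, M, M' => M = M' ∧ ∀ M'', Indist M'' M → Sat M'' φ
  | .seq π1 π2, M, M' => ∃ M'', Interp π1 M M'' ∧ Interp π2 M'' M'
  | .choice π1 π2, M, M' => Interp π1 M M' ∨ Interp π2 M M'
  | .star π, M, M' => Relation.ReflTransGen (fun A B => Interp π A B) M M'
  | .par π1 π2, M, M' => ∃ M1 M2 M1' M2',
      SplitRel M M1 M2 ∧ MergeRel M' M1' M2' ∧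
      Interp π1 M1 M1' ∧ Interp π2 M2 M2' ∧
      M1.R = M1'.R ∧ M1.W = M1'.W ∧ M1.V \ M1.W = M1'.V \ M1'.W ∧
      M2.R = M2'.R ∧ M2.W = M2'.W ∧ M2.V \ M2.W = M2'.V \ M2'.W
end

mutual
/-- Propositional variables occurring in a formula. -/
def varsF : Formula → Finset PVar
  | .atom p => {p}
  | .top => ∅
  | .neg φ => varsF φ
  | .or φ ψ => varsF φ ∪ varsF ψ
  | .dia π φ => varsP π ∪ varsF φ
/-- Propositional variables occurring in a program. -/
def varsP : Program → Finset PVar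
  | .assignT p => {p}
  | .assignF p => {p}
  | .addR p => {p}
  | .remR p => {p}
  | .addW p => {p}
  | .remW p => {p}
  | .testEx φ => varsF φ
  | .testEn φ => varsF φ
  | .seq π1 π2 => varsP π1 ∪ varsP π2
  | .choice π1 π2 => varsP π1 ∪ varsP π2
  | .star π => varsP π
  | .par π1 π2 => varsP π1 ∪ varsP π2
end

/-- `⊥`. -/
def botF : Formula := .neg .top
/-- Conjunction. -/
def andF (φ ψ : Formula) : Formula := .neg (.or (.neg φ) (.neg ψ))
/-- Implication. -/
def impF (φ ψ : Formula) : Formula := .or (.neg φ) ψ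
/-- Bi-implication. -/
def iffF (φ ψ : Formula) : Formula := andF (impF φ ψ) (impF ψ φ)
/-- `[π]φ`. -/
def boxF (π : Program) (φ : Formula) : Formula := .neg (.dia π (.neg φ))
/-- `w(p)`: `p` is writable. -/
def wF (p : PVar) : Formula := .dia (.assignT p) .top
/-- `r(p)`: `p` is readable. -/
def rF (p : PVar) : Formula :=
  .or (.dia (.testEn (.atom p)) .top) (.dia (.testEn (.neg (.atom p))) .top)

/-- Restriction `M ∩ P` of a model to a set of variables. -/
def interModel (M : Model) (P : Set PVar) : Model :=
  ⟨M.R ∩ P, M.W ∩ P, M.V ∩ P, Set.inter_subset_inter M.sub (subset_refl P)⟩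

/-- A formula is valid iff true in every model. -/
def Valid (φ : Formula) : Prop := ∀ M : Model, Sat M φ

/-! If `M` and `M'` agree on a set `P` containing the variables of `π` and `M ⟦π⟧ N`, then
`M' ⟦π⟧ N'`, where `N'` is `N` on `P` and `M'` off `P`. Split, merge, indistinguishability and
the atomic updates are all defined variable by variable, so they commute with this patching.
Truth of formulas and this simulation property of programs are proved by simultaneous
induction. -/

theorem Set.ite_union_union {α : Type*} (t s₁ s₂ s₁' s₂' : Set α) :
    t.ite (s₁ ∪ s₂) (s₁' ∪ s₂') = t.ite s₁ s₁' ∪ t.ite s₂ s₂' := by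
  ext x
  by_cases hx : x ∈ t <;> simp [Set.ite, hx]

theorem Set.ite_sdiff_sdiff {α : Type*} (t s₁ s₂ s₁' s₂' : Set α) :
    t.ite (s₁ \ s₂) (s₁' \ s₂') = t.ite s₁ s₁' \ t.ite s₂ s₂' := by
  ext x
  by_cases hx : x ∈ t <;> simp [Set.ite, hx]

theorem Set.ite_union_left_of_subset {α : Type*} {t u : Set α} (s s' : Set α) (h : u ⊆ t) :
    t.ite (s ∪ u) s' = t.ite s s' ∪ u := by
  ext x
  by_cases hx : x ∈ t
  · simp [Set.ite, hx]
  · have hu : x ∉ u := fun hu => hx (h hu)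
    simp [Set.ite, hx, hu]

theorem Set.ite_sdiff_left_of_subset {α : Type*} {t u : Set α} (s s' : Set α) (h : u ⊆ t) :
    t.ite (s \ u) s' = t.ite s s' \ u := by
  ext x
  by_cases hx : x ∈ t
  · simp [Set.ite, hx]
  · have hu : x ∉ u := fun hu => hx (h hu)
    simp [Set.ite, hx, hu]

theorem Set.ite_eq_right_iff {α : Type*} {t s s' : Set α} :
    t.ite s s' = s' ↔ s ∩ t = s' ∩ t := by
  refine ⟨fun h => ?_, fun h => ?_⟩
  · rw [← h, Set.ite_inter_self]
  · rw [Set.ite, h, Set.inter_union_sdiff]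

theorem Set.ite_ite_right {α : Type*} (t s s' s'' : Set α) :
    t.ite s (t.ite s' s'') = t.ite s s'' := by
  ext x
  by_cases hx : x ∈ t <;> simp [Set.ite, hx]

theorem interModel_eq_interModel_iff {M M' : Model} {P : Set PVar} :
    interModel M P = interModel M' P ↔
      M.R ∩ P = M'.R ∩ P ∧ M.W ∩ P = M'.W ∩ P ∧ M.V ∩ P = M'.V ∩ P := by
  simp [interModel, Model.ext_iff]

/-- `M.patch P N` reads like `M` on the variables of `P` and like `N` elsewhere. -/
@[simps]
def Model.patch (M : Model) (P : Set PVar) (N : Model) : Model :=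
  ⟨P.ite M.R N.R, P.ite M.W N.W, P.ite M.V N.V, Set.ite_mono P M.sub N.sub⟩

def Model.noAccess (M : Model) : Model :=
  ⟨∅, ∅, M.V, subset_rfl⟩

namespace Model

variable {P : Set PVar}

@[simp]
theorem interModel_patch (M N : Model) : interModel (M.patch P N) P = interModel M P := by
  simp [interModel_eq_interModel_iff]

theorem patch_eq_of_interModel_eq {M N : Model} (h : interModel M P = interModel N P) :
    M.patch P N = N := by
  rw [interModel_eq_interModel_iff] at h
  ext1 <;> simp [Set.ite_eq_right_iff, h]

theorem ite_eq_right_of_interModel_eq {M M' : Model} (h : interModel M P = interModel M' P) :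
    P.ite M.R M'.R = M'.R ∧ P.ite M.W M'.W = M'.W ∧ P.ite M.V M'.V = M'.V := by
  simpa [Model.ext_iff] using patch_eq_of_interModel_eq h

@[simp]
theorem patch_patch_right (M K N : Model) : M.patch P (K.patch P N) = M.patch P N := by
  ext1 <;> simp [Set.ite_ite_right]

end Model

section Patch

variable {P : Set PVar} {M M₁ M₂ N N₁ N₂ : Model}

theorem Indist.patch (h : Indist M N) (h' : Indist M₁ N₁) :
    Indist (M.patch P M₁) (N.patch P N₁) := by
  obtain ⟨hR, hW, hV⟩ := h
  obtain ⟨hR', hW', hV'⟩ := h'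
  refine ⟨?_, ?_, ?_⟩
  · simp only [Model.patch_R, hR, hR']
  · simp only [Model.patch_W, hW, hW']
  · simp only [Model.patch_R, Model.patch_V, ← Set.ite_inter_inter, hV, hV']

theorem RWdisjoint.patch (h : RWdisjoint M₁ M₂) (h' : RWdisjoint N₁ N₂) :
    RWdisjoint (M₁.patch P N₁) (M₂.patch P N₂) := by
  obtain ⟨h₁, h₂⟩ := h
  obtain ⟨h₁', h₂'⟩ := h'
  refine ⟨?_, ?_⟩ <;>
    simp only [Model.patch_R, Model.patch_W, ← Set.ite_inter_inter, Set.ite_same, *]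

theorem SplitRel.patch (h : SplitRel M M₁ M₂) (h' : SplitRel N N₁ N₂) :
    SplitRel (M.patch P N) (M₁.patch P N₁) (M₂.patch P N₂) := by
  obtain ⟨hd, hR, hW, hV₁, hV₂⟩ := h
  obtain ⟨hd', hR', hW', hV₁', hV₂'⟩ := h'
  refine ⟨hd.patch hd', ?_, ?_, ?_, ?_⟩
  · simp only [Model.patch_R, hR, hR', Set.ite_union_union]
  · simp only [Model.patch_W, hW, hW', Set.ite_union_union]
  · simp only [Model.patch_V, hV₁, hV₁']
  · simp only [Model.patch_V, hV₂, hV₂']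

theorem MergeRel.patch (h : MergeRel M M₁ M₂) (h' : MergeRel N N₁ N₂) :
    MergeRel (M.patch P N) (M₁.patch P N₁) (M₂.patch P N₂) := by
  obtain ⟨hd, hR, hW, hVW, hV⟩ := h
  obtain ⟨hd', hR', hW', hVW', hV'⟩ := h'
  refine ⟨hd.patch hd', ?_, ?_, ?_, ?_⟩
  · simp only [Model.patch_R, hR, hR', Set.ite_union_union]
  · simp only [Model.patch_W, hW, hW', Set.ite_union_union]
  · simp only [Model.patch_V, Model.patch_W, ← Set.ite_sdiff_sdiff, hVW, hVW']
  · simp only [Model.patch_V, Model.patch_W, hV, hV', Set.ite_union_union,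
      Set.ite_inter_inter]

theorem SplitRel.mergeRel (h : SplitRel M M₁ M₂) : MergeRel M M₁ M₂ := by
  obtain ⟨hd, hR, hW, hV₁, hV₂⟩ := h
  refine ⟨hd, hR, hW, by rw [← hV₁, ← hV₂], ?_⟩
  rw [← hV₁, ← hV₂, Set.inter_self, Set.union_eq_right.mpr]
  exact Set.union_subset Set.inter_subset_left Set.inter_subset_left

theorem splitRel_noAccess (M : Model) : SplitRel M M M.noAccess := by
  refine ⟨⟨?_, ?_⟩, ?_, ?_, rfl, rfl⟩ <;> simp [Model.noAccess]

end Patch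

theorem Sat.forall_indist_of_interModel_eq {φ : Formula} {P : Set PVar}
    (ih : ∀ {A A' : Model}, interModel A P = interModel A' P → Sat A φ → Sat A' φ)
    {M M' : Model} (hM : interModel M P = interModel M' P)
    (h : ∀ K, Indist K M → Sat K φ) (K : Model) (hK : Indist K M') : Sat K φ := by
  have hKM : Indist (K.patch P M) M := by
    have := hK.patch (P := P) (⟨rfl, rfl, rfl⟩ : Indist M M)
    rwa [Model.patch_eq_of_interModel_eq hM.symm] at this
  exact ih (Model.interModel_patch K M) (h _ hKM)

theorem Interp.patch_par {π₁ π₂ : Program} {P : Set PVar}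
    (ih₁ : ∀ {A A' B : Model}, interModel A P = interModel A' P → Interp π₁ A B →
      Interp π₁ A' (B.patch P A'))
    (ih₂ : ∀ {A A' B : Model}, interModel A P = interModel A' P → Interp π₂ A B →
      Interp π₂ A' (B.patch P A'))
    {M M' N : Model} (hM : interModel M P = interModel M' P) (h : Interp (.par π₁ π₂) M N) :
    Interp (.par π₁ π₂) M' (N.patch P M') := by
  obtain ⟨M₁, M₂, N₁, N₂, hsplit, hmerge, h₁, h₂, hR₁, hW₁, hVW₁, hR₂, hW₂, hVW₂⟩ :=
    h
  -- Outside `P`, `M'` is split trivially: the first thread gets everything, the second nothing.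
  have hsplit' : SplitRel M' (M₁.patch P M') (M₂.patch P M'.noAccess) := by
    have := hsplit.patch (P := P) (splitRel_noAccess M')
    rwa [Model.patch_eq_of_interModel_eq hM] at this
  have h₁' := ih₁ (Model.interModel_patch M₁ M').symm h₁
  have h₂' := ih₂ (Model.interModel_patch M₂ M'.noAccess).symm h₂
  rw [Model.patch_patch_right] at h₁' h₂'
  refine ⟨_, _, _, _, hsplit', hmerge.patch (splitRel_noAccess M').mergeRel, h₁', h₂',
    ?_, ?_, ?_, ?_, ?_, ?_⟩
  · rw [Model.patch_R, Model.patch_R, hR₁]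
  · rw [Model.patch_W, Model.patch_W, hW₁]
  · simp only [Model.patch_V, Model.patch_W, ← Set.ite_sdiff_sdiff, hVW₁]
  · rw [Model.patch_R, Model.patch_R, hR₂]
  · rw [Model.patch_W, Model.patch_W, hW₂]
  · simp only [Model.patch_V, Model.patch_W, ← Set.ite_sdiff_sdiff, hVW₂]

theorem Interp.patch_star {π : Program} {P : Set PVar}
    (ih : ∀ {A A' B : Model}, interModel A P = interModel A' P → Interp π A B →
      Interp π A' (B.patch P A'))
    {M M' N : Model} (hM : interModel M P = interModel M' P) (h : Interp (.star π) M N) :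
    Interp (.star π) M' (N.patch P M') := by
  induction h with
  | refl => rw [Model.patch_eq_of_interModel_eq hM]; exact .refl
  | tail _ hstep ihK =>
    have hstep' := ih (Model.interModel_patch _ M').symm hstep
    rw [Model.patch_patch_right] at hstep'
    exact Relation.ReflTransGen.tail ihK hstep'

mutual

theorem Sat.of_interModel_eq : ∀ {φ : Formula} {P : Set PVar} {M M' : Model},
    ↑(varsF φ) ⊆ P → interModel M P = interModel M' P → Sat M φ → Sat M' φ
  | .atom p, P, M, M', hv, hM, h => by
    have hp : p ∈ P := hv (by simp [varsF])
    have hV := (interModel_eq_interModel_iff.mp hM).2.2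
    exact ((Set.ext_iff.mp hV p).mp ⟨h, hp⟩).1
  | .top, _, _, _, _, _, h => h
  | .neg φ, P, M, M', hv, hM, h => fun h' => h (Sat.of_interModel_eq hv hM.symm h')
  | .or φ ψ, P, M, M', hv, hM, h => by
    simp only [varsF, Finset.coe_union, Set.union_subset_iff] at hv
    exact h.imp (Sat.of_interModel_eq hv.1 hM) (Sat.of_interModel_eq hv.2 hM)
  | .dia π φ, P, M, M', hv, hM, h => by
    simp only [varsF, Finset.coe_union, Set.union_subset_iff] at hv
    obtain ⟨N, hN, hφ⟩ := h
    exact ⟨N.patch P M', Interp.patch hv.1 hM hN,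
      Sat.of_interModel_eq hv.2 (Model.interModel_patch N M').symm hφ⟩

theorem Interp.patch : ∀ {π : Program} {P : Set PVar} {M M' N : Model},
    ↑(varsP π) ⊆ P → interModel M P = interModel M' P → Interp π M N →
    Interp π M' (N.patch P M')
  | .assignT p, P, M, M', N, hv, hM, h => by
    obtain ⟨hR, hW, hV, hpW⟩ := h
    have hp : {p} ⊆ P := by simpa [varsP] using hv
    obtain ⟨eR, eW, eV⟩ := Model.ite_eq_right_of_interModel_eq hM
    refine ⟨?_, ?_, ?_, eW ▸ Or.inl ⟨hpW, hp rfl⟩⟩ <;>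
      simp only [Model.patch_R, Model.patch_W, Model.patch_V, hR, hW, hV, eR, eW, eV,
        Set.ite_union_left_of_subset _ _ hp]
  | .assignF p, P, M, M', N, hv, hM, h => by
    obtain ⟨hR, hW, hV, hpW⟩ := h
    have hp : {p} ⊆ P := by simpa [varsP] using hv
    obtain ⟨eR, eW, eV⟩ := Model.ite_eq_right_of_interModel_eq hM
    refine ⟨?_, ?_, ?_, eW ▸ Or.inl ⟨hpW, hp rfl⟩⟩ <;>
      simp only [Model.patch_R, Model.patch_W, Model.patch_V, hR, hW, hV, eR, eW, eV,
        Set.ite_sdiff_left_of_subset _ _ hp]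
  | .addR p, P, M, M', N, hv, hM, h => by
    obtain ⟨hR, hW, hV⟩ := h
    have hp : {p} ⊆ P := by simpa [varsP] using hv
    obtain ⟨eR, eW, eV⟩ := Model.ite_eq_right_of_interModel_eq hM
    refine ⟨?_, ?_, ?_⟩ <;>
      simp only [Model.patch_R, Model.patch_W, Model.patch_V, hR, hW, hV, eR, eW, eV,
        Set.ite_union_left_of_subset _ _ hp]
  | .remR p, P, M, M', N, hv, hM, h => by
    obtain ⟨hR, hW, hV⟩ := h
    have hp : {p} ⊆ P := by simpa [varsP] using hv
    obtain ⟨eR, eW, eV⟩ := Model.ite_eq_right_of_interModel_eq hM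
    refine ⟨?_, ?_, ?_⟩ <;>
      simp only [Model.patch_R, Model.patch_W, Model.patch_V, hR, hW, hV, eR, eW, eV,
        Set.ite_sdiff_left_of_subset _ _ hp]
  | .addW p, P, M, M', N, hv, hM, h => by
    obtain ⟨hR, hW, hV⟩ := h
    have hp : {p} ⊆ P := by simpa [varsP] using hv
    obtain ⟨eR, eW, eV⟩ := Model.ite_eq_right_of_interModel_eq hM
    refine ⟨?_, ?_, ?_⟩ <;>
      simp only [Model.patch_R, Model.patch_W, Model.patch_V, hR, hW, hV, eR, eW, eV,
        Set.ite_union_left_of_subset _ _ hp]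
  | .remW p, P, M, M', N, hv, hM, h => by
    obtain ⟨hR, hW, hV⟩ := h
    have hp : {p} ⊆ P := by simpa [varsP] using hv
    obtain ⟨eR, eW, eV⟩ := Model.ite_eq_right_of_interModel_eq hM
    refine ⟨?_, ?_, ?_⟩ <;>
      simp only [Model.patch_R, Model.patch_W, Model.patch_V, hR, hW, hV, eR, eW, eV,
        Set.ite_sdiff_left_of_subset _ _ hp]
  | .testEx φ, P, M, M', N, hv, hM, h => by
    obtain ⟨rfl, hφ⟩ := h
    rw [Model.patch_eq_of_interModel_eq hM]
    exact ⟨rfl, Sat.of_interModel_eq hv hM hφ⟩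
  | .testEn φ, P, M, M', N, hv, hM, h => by
    obtain ⟨rfl, hφ⟩ := h
    rw [Model.patch_eq_of_interModel_eq hM]
    exact ⟨rfl, Sat.forall_indist_of_interModel_eq (Sat.of_interModel_eq hv) hM hφ⟩
  | .seq π₁ π₂, P, M, M', N, hv, hM, h => by
    simp only [varsP, Finset.coe_union, Set.union_subset_iff] at hv
    obtain ⟨K, h₁, h₂⟩ := h
    refine ⟨K.patch P M', Interp.patch hv.1 hM h₁, ?_⟩
    have h₂' := Interp.patch hv.2 (Model.interModel_patch K M').symm h₂
    rwa [Model.patch_patch_right] at h₂'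
  | .choice π₁ π₂, P, M, M', N, hv, hM, h => by
    simp only [varsP, Finset.coe_union, Set.union_subset_iff] at hv
    exact h.imp (Interp.patch hv.1 hM) (Interp.patch hv.2 hM)
  | .star π, P, M, M', N, hv, hM, h =>
    Interp.patch_star (Interp.patch (π := π) hv) hM h
  | .par π₁ π₂, P, M, M', N, hv, hM, h => by
    simp only [varsP, Finset.coe_union, Set.union_subset_iff] at hv
    exact Interp.patch_par (Interp.patch hv.1) (Interp.patch hv.2) hM h

end

/-- Irrelevance of variables, formula part (Lemma 1(1)): if
`vars(φ) ⊆ P` and `M₁ ∩ P = M₁' ∩ P` then `M₁ ⊨ φ` implies `M₁' ⊨ φ`. -/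
theorem irrelevant_variables_formula (φ : Formula) (P : Set PVar)
    (hP : ↑(varsF φ) ⊆ P) (M1 M1' : Model)
    (h : interModel M1 P = interModel M1' P) :
    Sat M1 φ → Sat M1' φ :=
  Sat.of_interModel_eq hP h
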